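/- With notation as in the broken circuit sheaf: for any flat F ≠ ∅, the reduction of the stalk R^{bc}(F) = R[Δ^{bc}_{H_F}] modulo the linear forms from V(F) vanishes in degrees ≥ 2·rk F, while the kernel R^{bc}(F, ∂F) of the restriction to ∂F is concentrated in degree 2·rk F (since ∪_{E<F} Δ^{bc}_{H_E} is the (rk F − 2)-skeleton of Δ^{bc}_{H_F}). Consequently the induced map from the reduction of R^{bc}(F,∂F) to the reduction of R^{bc}(F) is zero, and R^{bc} is indecomposable as an A-module. -/

import Mathlib

open MvPolynomial

variable {I : Type} [Fintype I] [DecidableEq I] [LinearOrder I]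

def IsFlat (V : AffineSubspace ℝ (I → ℝ)) (F : Finset I) : Prop :=
  ∃ x ∈ V, ∀ i : I, i ∈ F ↔ x i = 0

def Essential (V : AffineSubspace ℝ (I → ℝ)) : Prop :=
  ∀ i : I, ∃ x ∈ V, ∃ y ∈ V, x i ≠ y i

noncomputable def resF (V : AffineSubspace ℝ (I → ℝ)) (F : Finset I) :
    V.direction →ₗ[ℝ] ({i : I // i ∈ F} → ℝ) :=
  (LinearMap.funLeft ℝ ℝ (fun i : {i : I // i ∈ F} => (i : I))).comp V.direction.subtype

/-- The rank of a flat `F`: the codimension of `H_F`, i.e. the dimension of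
`V(F) = V₀/⟨F⟩`, i.e. the rank of the evaluation map `V₀ → ℝ^F`. -/
noncomputable def rkF (V : AffineSubspace ℝ (I → ℝ)) (F : Finset I) : ℕ :=
  Module.finrank ℝ (LinearMap.range (resF V F))

def Face (V : AffineSubspace ℝ (I → ℝ)) (S : Finset I) : Prop :=
  Function.Surjective (resF V S)

def Circuit (V : AffineSubspace ℝ (I → ℝ)) (C : Finset I) : Prop :=
  ¬ Face V C ∧ ∀ D : Finset I, D ⊂ C → Face V D

def BCFace (V : AffineSubspace ℝ (I → ℝ)) (F : Finset I) (S : Finset I) : Prop :=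
  S ⊆ F ∧ Face V S ∧
    ∀ C : Finset I, Circuit V C → C ⊆ F →
      ∀ m ∈ C, (∀ j ∈ C, m ≤ j) → ¬ C.erase m ⊆ S

noncomputable def faceIdeal (Δ : Set (Finset I)) : Ideal (MvPolynomial I ℝ) :=
  Ideal.span {p | ∃ S : Finset I, S ∉ Δ ∧ p = ∏ i ∈ S, (X i : MvPolynomial I ℝ)}

/-- The ideal generated by the linear forms coming from `V(F)`, i.e. the restrictions
to `F` of the linear forms `∑ v_i e_i`, `v ∈ V₀`. -/
noncomputable def linIdeal (V : AffineSubspace ℝ (I → ℝ)) (F : Finset I) :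
    Ideal (MvPolynomial I ℝ) :=
  Ideal.span {p | ∃ v ∈ V.direction, p = ∑ i ∈ F, v i • (X i : MvPolynomial I ℝ)}

/-- The preimage in `ℝ[e_i : i ∈ I]` of the costalk `R^{bc}(F, ∂F)`: the polynomials
restricting to zero in every stalk `R^{bc}(E)` for flats `E < F`. -/
noncomputable def costalkIdeal (V : AffineSubspace ℝ (I → ℝ)) (F : Finset I) :
    Ideal (MvPolynomial I ℝ) :=
  ⨅ (E : Finset I) (_ : IsFlat V E ∧ E ⊂ F), faceIdeal {S | BCFace V E S}

/-
Modulo the linear forms `ℓ_v = ∑_{j ∈ F} v_j x_j` (`v ∈ V₀`), a monomial `x^a` whose support `S`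
is a face can be straightened: choosing `v` with `v|_S = δ_i` rewrites `x^a` as `x^(a - e_i) ℓ_v`
minus monomials supported on `S ∪ {j}`, `j ∈ F \ S`. Iterating lowers `deg a - |supp a|` until the
monomial is squarefree. Faces have at most `rk F` elements, so in degree `≥ rk F` only facets
survive; every facet of `Δ^{bc}_{H_F}` contains `min F`, and straightening at `min F` kills it.

For the costalk: a generic point of `H_F ∩ {x_S = 0}` has a zero set `E` with `S ⊆ E ⊊ F` as soon
as `|S| < rk F`, so monomials of degree `< rk F` in the costalk lie in the face ideal; in degree
`> rk F` the straightening keeps the factor `x^(a - e_i)` inside the costalk.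
-/

set_option linter.unusedSectionVars false

open Finset

namespace Finsupp

variable {σ : Type*}

theorem card_support_le_degree (a : σ →₀ ℕ) : #a.support ≤ degree a := by
  rw [degree_apply, card_eq_sum_ones]
  exact Finset.sum_le_sum fun i hi => Nat.one_le_iff_ne_zero.2 (mem_support_iff.1 hi)

theorem degree_eq_card_support_of_le_one {a : σ →₀ ℕ} (h : ∀ i, a i ≤ 1) :
    degree a = #a.support := by
  rw [degree_apply, card_eq_sum_ones]
  exact Finset.sum_congr rfl fun i hi =>
    le_antisymm (h i) (Nat.one_le_iff_ne_zero.2 (mem_support_iff.1 hi))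

theorem degree_tsub_single_add_one {a : σ →₀ ℕ} {i : σ} (hi : i ∈ a.support) :
    degree (a - single i 1) + 1 = degree a := by
  conv_rhs => rw [← tsub_add_cancel_of_le (single_le_iff.2
    (Nat.one_le_iff_ne_zero.2 (mem_support_iff.1 hi)))]
  rw [map_add, degree_single]

theorem degree_tsub_single_add_single {a : σ →₀ ℕ} {i : σ} (hi : i ∈ a.support) (j : σ) :
    degree (a - single i 1 + single j 1) = degree a := by
  rw [map_add, degree_single, degree_tsub_single_add_one hi]

theorem support_add_single_one [DecidableEq σ] (b : σ →₀ ℕ) (j : σ) :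
    (b + single j 1).support = insert j b.support := by
  rw [support_add_eq_union, support_single _ one_ne_zero, union_comm, insert_eq]

theorem support_tsub_single_of_two_le {a : σ →₀ ℕ} {i : σ} (h : 2 ≤ a i) :
    (a - single i 1).support = a.support := by
  ext k
  rcases eq_or_ne k i with rfl | hk
  · simp only [mem_support_iff, tsub_apply, single_eq_same]
    omega
  · simp [single_eq_of_ne hk]

theorem support_tsub_single_of_eq_one [DecidableEq σ] {a : σ →₀ ℕ} {i : σ} (h : a i = 1) :
    (a - single i 1).support = a.support.erase i := by
  ext k
  rcases eq_or_ne k i with rfl | hk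
  · simp [h]
  · simp [single_eq_of_ne hk, hk]

theorem degree_sub_card_support_lt [DecidableEq σ] {a : σ →₀ ℕ} {i j : σ} (h : 2 ≤ a i)
    (hj : j ∉ a.support) :
    degree (a - single i 1 + single j 1) - #(a - single i 1 + single j 1).support
      < degree a - #a.support := by
  have hi : i ∈ a.support := mem_support_iff.2 (by omega)
  have hcard := card_support_le_degree (a - single i 1)
  rw [support_tsub_single_of_two_le h] at hcard
  have hdeg := degree_tsub_single_add_one hi
  rw [degree_tsub_single_add_single hi, support_add_single_one, support_tsub_single_of_two_le h,
    card_insert_of_notMem hj]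
  omega

theorem indicator_one_le_iff {S : Finset σ} {a : σ →₀ ℕ} :
    indicator S (fun _ _ => 1) ≤ a ↔ S ⊆ a.support := by
  refine ⟨fun h i hi => ?_, fun h i => ?_⟩
  · have := h i
    rw [indicator_of_mem hi] at this
    exact mem_support_iff.2 (by omega)
  · by_cases hi : i ∈ S
    · rw [indicator_of_mem hi]
      exact Nat.one_le_iff_ne_zero.2 (mem_support_iff.1 (h hi))
    · rw [indicator_of_notMem hi]
      exact Nat.zero_le _

end Finsupp

open Finsupp

namespace MvPolynomial

theorem mem_ideal_of_forall_monomial_mem {σ R : Type*} [CommSemiring R]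
    {J : Ideal (MvPolynomial σ R)} {p : MvPolynomial σ R}
    (h : ∀ a ∈ p.support, monomial a (p.coeff a) ∈ J) : p ∈ J :=
  p.as_sum ▸ J.sum_mem h

theorem IsHomogeneous.degree_eq_of_mem_support {σ R : Type*} [CommSemiring R]
    {p : MvPolynomial σ R} {d : ℕ} (hp : p.IsHomogeneous d) {a : σ →₀ ℕ}
    (ha : a ∈ p.support) : degree a = d := by
  rw [degree_eq_weight_one]
  exact hp (mem_support_iff.1 ha)

theorem prod_X_eq_monomial_indicator {σ R : Type*} [CommSemiring R] (S : Finset σ) :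
    ∏ i ∈ S, (X i : MvPolynomial σ R) = monomial (Finsupp.indicator S fun _ _ => 1) 1 := by
  simpa using prod_X_pow (R := R) (fun _ => 1) S

end MvPolynomial

theorem faceIdeal_eq_span_monomial (Δ : Set (Finset I)) :
    faceIdeal Δ = Ideal.span ((fun s => monomial s (1 : ℝ)) ''
      ((fun S => indicator S fun _ _ => 1) '' Δᶜ)) := by
  rw [faceIdeal, Set.image_image]
  congr 1
  ext p
  simp [prod_X_eq_monomial_indicator, eq_comm]

theorem mem_faceIdeal_iff {Δ : Set (Finset I)} {p : MvPolynomial I ℝ} :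
    p ∈ faceIdeal Δ ↔ ∀ a ∈ p.support, ∃ S ∉ Δ, S ⊆ a.support := by
  simp [faceIdeal_eq_span_monomial, mem_ideal_span_monomial_image, indicator_one_le_iff]

theorem monomial_mem_faceIdeal {Δ : Set (Finset I)} {a : I →₀ ℕ} (c : ℝ) (h : a.support ∉ Δ) :
    monomial a c ∈ faceIdeal Δ :=
  mem_faceIdeal_iff.2 fun _ hb => ⟨a.support, h, mem_singleton.1 (support_monomial_subset hb) ▸
    subset_rfl⟩

theorem exists_forall_add_apply_ne_zero {K W ι : Type*} [Field K] [Infinite K] [AddCommGroup W]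
    [Module K W] [Finite ι] (g : W →ₗ[K] ι → K) (c : ι → K) :
    ∃ w, ∀ i, (∃ w', c i + g w' i ≠ 0) → c i + g w i ≠ 0 := by
  -- homogenize: `(w, t)` avoiding the kernels of `t` and of `t c i + g w i` yields `t⁻¹ • w`
  let f : Option {i // ∃ w', c i + g w' i ≠ 0} → Module.Dual K (W × K)
    | none => LinearMap.snd K W K
    | Option.some i => LinearMap.proj (R := K) (φ := fun _ => K) i.1 ∘ₗ g ∘ₗ LinearMap.fst K W K
        + c i • LinearMap.snd K W K
  obtain ⟨⟨w, t⟩, h⟩ := Module.Dual.exists_forall_ne_zero_of_forall_exists f (by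
    rintro (_ | ⟨i, w', hw'⟩)
    · exact ⟨(0, 1), by simp [f]⟩
    · exact ⟨(w', 1), by simpa [f, add_comm] using hw'⟩)
  have ht : t ≠ 0 := h none
  refine ⟨t⁻¹ • w, fun i hi => ?_⟩
  have hit := h (Option.some ⟨i, hi⟩)
  simp only [f, LinearMap.add_apply, LinearMap.coe_comp, Function.comp_apply, LinearMap.fst_apply,
    LinearMap.proj_apply, LinearMap.smul_apply, LinearMap.snd_apply, smul_eq_mul] at hit
  have : c i + g (t⁻¹ • w) i = t⁻¹ * (g w i + c i * t) := by
    rw [map_smul, Pi.smul_apply, smul_eq_mul]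
    field_simp
    ring
  rw [this]
  exact mul_ne_zero (inv_ne_zero ht) hit

section Arrangement

variable {V : AffineSubspace ℝ (I → ℝ)} {F S T : Finset I}

theorem resF_eq_comp (hTS : T ⊆ S) :
    resF V T = (LinearMap.funLeft ℝ ℝ fun i : T => (⟨i, hTS i.2⟩ : S)).comp (resF V S) :=
  rfl

theorem Face.mono (hTS : T ⊆ S) (hS : Face V S) : Face V T := by
  rw [Face, resF_eq_comp hTS, LinearMap.coe_comp]
  exact (LinearMap.funLeft_surjective_of_injective _ _ _
    fun _ _ hab => Subtype.ext (by simpa using congrArg Subtype.val hab)).comp hS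

theorem Face.card_le (hS : Face V S) (hSF : S ⊆ F) : #S ≤ rkF V F := by
  have h := Submodule.finrank_map_le
    (LinearMap.funLeft ℝ ℝ fun i : S => (⟨i, hSF i.2⟩ : F)) (LinearMap.range (resF V F))
  rwa [← LinearMap.range_comp, ← resF_eq_comp hSF, LinearMap.range_eq_top.2 hS, finrank_top,
    Module.finrank_pi, Fintype.card_coe] at h

theorem exists_mem_ker_resF_ne_zero (hSF : S ⊆ F) (h : #S < rkF V F) :
    ∃ v ∈ LinearMap.ker (resF V S), resF V F v ≠ 0 := by
  let r := (LinearMap.funLeft ℝ ℝ fun i : S => (⟨i, hSF i.2⟩ : F)).domRestrict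
    (LinearMap.range (resF V F))
  have hr : LinearMap.ker r ≠ ⊥ :=
    LinearMap.ker_ne_bot_of_finrank_lt (by rwa [Module.finrank_pi, Fintype.card_coe])
  obtain ⟨⟨_, v, rfl⟩, hvr, hv0⟩ := Submodule.exists_mem_ne_zero_of_ne_bot hr
  refine ⟨v, ?_, fun h0 => hv0 (Subtype.ext h0)⟩
  rw [LinearMap.mem_ker, resF_eq_comp hSF]
  exact LinearMap.mem_ker.1 hvr

theorem exists_circuit_subset (hS : ¬ Face V S) : ∃ C ⊆ S, Circuit V C := by
  induction S using Finset.strongInduction with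
  | _ S ih =>
    by_cases h : ∀ D, D ⊂ S → Face V D
    · exact ⟨S, subset_rfl, hS, h⟩
    · obtain ⟨D, hDS, hD⟩ := not_forall₂.1 h
      obtain ⟨C, hCD, hC⟩ := ih D hDS hD
      exact ⟨C, hCD.trans hDS.subset, hC⟩

theorem BCFace.mono (hTS : T ⊆ S) (h : BCFace V F S) : BCFace V F T :=
  ⟨hTS.trans h.1, h.2.1.mono hTS, fun C hC hCF m hm hmin hsub =>
    h.2.2 C hC hCF m hm hmin (hsub.trans hTS)⟩

theorem BCFace.of_subset {E : Finset I} (h : BCFace V F S) (hSE : S ⊆ E) (hEF : E ⊆ F) :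
    BCFace V E S :=
  ⟨hSE, h.2.1, fun C hC hCE => h.2.2 C hC (hCE.trans hEF)⟩

/-- Otherwise `insert (min F) S` is dependent; a circuit in it either contains `min F`, and then
its broken circuit lies in `S`, or lies in `S` itself. -/
theorem BCFace.min'_mem_of_card_eq (hFne : F.Nonempty) (h : BCFace V F S)
    (hcard : #S = rkF V F) : F.min' hFne ∈ S := by
  set e := F.min' hFne
  by_contra he
  have hsub : insert e S ⊆ F := insert_subset (F.min'_mem hFne) h.1
  have hnface : ¬ Face V (insert e S) := fun hface => by
    have := hface.card_le hsub
    rw [card_insert_of_notMem he] at this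
    omega
  obtain ⟨C, hCS, hC⟩ := exists_circuit_subset hnface
  by_cases heC : e ∈ C
  · refine h.2.2 C hC (hCS.trans hsub) e heC (fun j hj => F.min'_le j (hsub (hCS hj))) ?_
    exact fun x hx => (mem_insert.1 (hCS (mem_of_mem_erase hx))).resolve_left (ne_of_mem_erase hx)
  · exact hC.1 (h.2.1.mono fun x hx =>
      (mem_insert.1 (hCS hx)).resolve_left fun hxe => heC (hxe ▸ hx))

/-- `E` is the zero set of `x_F + u` for a generic `u ∈ V₀` vanishing on `S`; such `u` can be
nonzero somewhere on `F` because `|S| < rk F`. -/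
theorem IsFlat.exists_isFlat_ssubset (hF : IsFlat V F) (hSF : S ⊆ F) (h : #S < rkF V F) :
    ∃ E, IsFlat V E ∧ S ⊆ E ∧ E ⊂ F := by
  obtain ⟨xF, hxF, hxFF⟩ := hF
  obtain ⟨v₀, hv₀S, hv₀F⟩ := exists_mem_ker_resF_ne_zero hSF h
  obtain ⟨i₀, hi₀⟩ := Function.ne_iff.1 hv₀F
  obtain ⟨⟨u, huS⟩, hu⟩ := exists_forall_add_apply_ne_zero (W := LinearMap.ker (resF V S))
    (V.direction.subtype ∘ₗ (LinearMap.ker (resF V S)).subtype) xF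
  have hx : (u : I → ℝ) + xF ∈ V := AffineSubspace.vadd_mem_of_mem_direction u.2 hxF
  refine ⟨univ.filter fun i => xF i + (u : I → ℝ) i = 0, ⟨_, hx, fun i => by simp [add_comm]⟩,
    fun i hi => ?_, ssubset_iff_of_subset (fun i hi => ?_) |>.2 ⟨i₀, i₀.2, fun hi => ?_⟩⟩
  · have hu0 : (u : I → ℝ) i = 0 := congrFun (LinearMap.mem_ker.1 huS) ⟨i, hi⟩
    simp [(hxFF i).1 (hSF hi), hu0]
  · by_contra hiF
    exact hu i ⟨0, by simpa [hxFF i] using hiF⟩ (mem_filter.1 hi).2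
  · refine hu i₀ ⟨⟨v₀, hv₀S⟩, ?_⟩ (mem_filter.1 hi).2
    rw [(hxFF i₀).1 i₀.2, zero_add]
    exact hi₀

/-- `S` is a face of `∂F = ⋃_{E < F} Δ^{bc}_{H_E}`. -/
def InBoundary (V : AffineSubspace ℝ (I → ℝ)) (F S : Finset I) : Prop :=
  ∃ E, IsFlat V E ∧ E ⊂ F ∧ BCFace V E S

theorem InBoundary.mono (hTS : T ⊆ S) : InBoundary V F S → InBoundary V F T :=
  fun ⟨E, hE, hEF, hS⟩ => ⟨E, hE, hEF, hS.mono hTS⟩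

theorem BCFace.inBoundary_of_card_lt (hF : IsFlat V F) (hS : BCFace V F S)
    (h : #S < rkF V F) : InBoundary V F S :=
  let ⟨E, hE, hSE, hEF⟩ := hF.exists_isFlat_ssubset hS.1 h
  ⟨E, hE, hEF, hS.of_subset hSE hEF.subset⟩

theorem mem_costalkIdeal_iff {p : MvPolynomial I ℝ} :
    p ∈ costalkIdeal V F ↔ ∀ a ∈ p.support, ¬ InBoundary V F a.support := by
  simp only [costalkIdeal, Ideal.mem_iInf, mem_faceIdeal_iff, Set.mem_ofPred_eq, and_imp]
  refine ⟨fun h a ha ⟨E, hE, hEF, hS⟩ => ?_, fun h E hE hEF a ha =>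
    ⟨a.support, fun hS => h a ha ⟨E, hE, hEF, hS⟩, subset_rfl⟩⟩
  obtain ⟨T, hT, hTa⟩ := h E hE hEF a ha
  exact hT (hS.mono hTa)

theorem monomial_mem_costalkIdeal {a : I →₀ ℕ} (c : ℝ) (h : ¬ InBoundary V F a.support) :
    monomial a c ∈ costalkIdeal V F :=
  mem_costalkIdeal_iff.2 fun _ hb => mem_singleton.1 (support_monomial_subset hb) ▸ h

theorem linForm_mem_linIdeal {v : I → ℝ} (hv : v ∈ V.direction) :
    ∑ j ∈ F, v j • X j ∈ linIdeal V F :=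
  Ideal.subset_span ⟨v, hv, rfl⟩

/-- Straightening: if `S = supp a` is a face, pick `v ∈ V₀` with `v|_S = δ_i`; then
`x^(a - e_i) · ℓ_v = x^a + ∑_{j ∈ F \ S} v_j x^(a - e_i + e_j)`. -/
theorem monomial_mem_of_straighten {J : Ideal (MvPolynomial I ℝ)} {a : I →₀ ℕ} (c : ℝ) {i : I}
    (hface : Face V a.support) (hF : a.support ⊆ F) (hi : i ∈ a.support)
    (hlin : ∀ v ∈ V.direction, monomial (a - single i 1) c * ∑ j ∈ F, v j • X j ∈ J)
    (hrest : ∀ j ∈ F, j ∉ a.support → monomial (a - single i 1 + single j 1) c ∈ J) :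
    monomial a c ∈ J := by
  obtain ⟨v, hv⟩ := hface fun k => (Pi.single i 1 : I → ℝ) k
  have hvS : ∀ k ∈ a.support, (v : I → ℝ) k = (Pi.single i 1 : I → ℝ) k :=
    fun k hk => congrFun hv ⟨k, hk⟩
  have key : monomial (a - single i 1) c * ∑ j ∈ F, (v : I → ℝ) j • X j
      = monomial a c +
        ∑ j ∈ F \ a.support, (v : I → ℝ) j • monomial (a - single i 1 + single j 1) c := by
    simp_rw [Finset.mul_sum, mul_smul_comm, X, monomial_mul, mul_one]
    rw [← sum_sdiff hF, add_comm, sum_eq_single_of_mem i hi]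
    · rw [hvS i hi, Pi.single_eq_same, one_smul, tsub_add_cancel_of_le
        (single_le_iff.2 (Nat.one_le_iff_ne_zero.2 (mem_support_iff.1 hi)))]
    · intro k hk hki
      rw [hvS k hk, Pi.single_eq_of_ne hki, zero_smul]
  have := J.sub_mem (hlin v v.2) (J.sum_mem fun j hj =>
    Submodule.smul_of_tower_mem J ((v : I → ℝ) j) (hrest j (mem_sdiff.1 hj).1 (mem_sdiff.1 hj).2))
  rwa [key, add_sub_cancel_right] at this

theorem monomial_mem_faceIdeal_of_degree_lt (hF : IsFlat V F) {a : I →₀ ℕ} (c : ℝ)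
    (ha : ¬ InBoundary V F a.support) (hdeg : degree a < rkF V F) :
    monomial a c ∈ faceIdeal {S | BCFace V F S} :=
  monomial_mem_faceIdeal c fun hS =>
    ha (hS.inBoundary_of_card_lt hF ((card_support_le_degree a).trans_lt hdeg))

/-- Straightening at `min F`, which lies in every facet, produces squarefree
monomials of degree `rk F` avoiding `min F`, hence outside `Δ^{bc}_{H_F}`. -/
theorem monomial_mem_faceIdeal_sup_linIdeal_of_le_one (hFne : F.Nonempty) {a : I →₀ ℕ} (c : ℝ)
    (hΔ : BCFace V F a.support) (hsq : ∀ i, a i ≤ 1) (hdeg : rkF V F ≤ degree a) :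
    monomial a c ∈ faceIdeal {S | BCFace V F S} ⊔ linIdeal V F := by
  have hcard : #a.support = rkF V F :=
    le_antisymm (hΔ.2.1.card_le hΔ.1) (degree_eq_card_support_of_le_one hsq ▸ hdeg)
  have he := hΔ.min'_mem_of_card_eq hFne hcard
  have ha1 : a (F.min' hFne) = 1 :=
    le_antisymm (hsq _) (Nat.one_le_iff_ne_zero.2 (mem_support_iff.1 he))
  refine monomial_mem_of_straighten c hΔ.2.1 hΔ.1 he
    (fun v hv => Ideal.mem_sup_right (Ideal.mul_mem_left _ _ (linForm_mem_linIdeal hv)))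
    fun j _ hj => Ideal.mem_sup_left (monomial_mem_faceIdeal c fun hΔ' => ?_)
  rw [support_add_single_one, support_tsub_single_of_eq_one ha1] at hΔ'
  have hpos : 0 < #a.support := card_pos.2 ⟨_, he⟩
  rcases mem_insert.1 (hΔ'.min'_mem_of_card_eq hFne (by
      rw [card_insert_of_notMem fun h => hj (mem_of_mem_erase h), card_erase_of_mem he]
      omega)) with h | h
  · exact hj (h ▸ he)
  · exact notMem_erase _ _ h

theorem monomial_mem_faceIdeal_sup_linIdeal (hFne : F.Nonempty) (a : I →₀ ℕ) (c : ℝ)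
    (hdeg : rkF V F ≤ degree a) :
    monomial a c ∈ faceIdeal {S | BCFace V F S} ⊔ linIdeal V F := by
  by_cases hΔ : BCFace V F a.support
  swap
  · exact Ideal.mem_sup_left (monomial_mem_faceIdeal c hΔ)
  by_cases hsq : ∀ i, a i ≤ 1
  · exact monomial_mem_faceIdeal_sup_linIdeal_of_le_one hFne c hΔ hsq hdeg
  obtain ⟨i, hi⟩ := not_forall.1 hsq
  have hi' : i ∈ a.support := mem_support_iff.2 (by omega)
  exact monomial_mem_of_straighten c hΔ.2.1 hΔ.1 hi'
    (fun v hv => Ideal.mem_sup_right (Ideal.mul_mem_left _ _ (linForm_mem_linIdeal hv)))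
    fun j _ hj => monomial_mem_faceIdeal_sup_linIdeal hFne _ c
      ((degree_tsub_single_add_single hi' j).symm ▸ hdeg)
termination_by degree a - #a.support
decreasing_by exact degree_sub_card_support_lt (not_le.1 hi) hj

theorem monomial_mem_faceIdeal_sup_linIdeal_mul_costalkIdeal (a : I →₀ ℕ) (c : ℝ)
    (ha : ¬ InBoundary V F a.support) (hdeg : rkF V F < degree a) :
    monomial a c ∈ faceIdeal {S | BCFace V F S} ⊔ linIdeal V F * costalkIdeal V F := by
  by_cases hΔ : BCFace V F a.support
  swap
  · exact Ideal.mem_sup_left (monomial_mem_faceIdeal c hΔ)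
  obtain ⟨i, hi⟩ : ∃ i, 2 ≤ a i := by
    by_contra! hsq
    have := hΔ.2.1.card_le hΔ.1
    rw [← degree_eq_card_support_of_le_one fun i => Nat.le_of_lt_succ (hsq i)] at this
    omega
  have hi' : i ∈ a.support := mem_support_iff.2 (by omega)
  refine monomial_mem_of_straighten c hΔ.2.1 hΔ.1 hi' (fun v hv => ?_) fun j _ hj => ?_
  · rw [mul_comm (monomial _ c)]
    refine Ideal.mem_sup_right (Ideal.mul_mem_mul (linForm_mem_linIdeal hv)
      (monomial_mem_costalkIdeal c ?_))
    rwa [support_tsub_single_of_two_le hi]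
  · refine monomial_mem_faceIdeal_sup_linIdeal_mul_costalkIdeal _ c (fun hB => ha (hB.mono ?_))
      ((degree_tsub_single_add_single hi' j).symm ▸ hdeg)
    rw [support_add_single_one, support_tsub_single_of_two_le hi]
    exact subset_insert _ _
termination_by degree a - #a.support
decreasing_by exact degree_sub_card_support_lt hi hj

end Arrangement

theorem stmt13 (V : AffineSubspace ℝ (I → ℝ))
    (F : Finset I) (hF : IsFlat V F) (hFne : F ≠ ∅) :
    (∀ (p : MvPolynomial I ℝ) (d : ℕ), p.IsHomogeneous d → rkF V F ≤ d →
        p ∈ faceIdeal {S | BCFace V F S} ⊔ linIdeal V F) ∧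
    (∀ (p : MvPolynomial I ℝ) (d : ℕ), p.IsHomogeneous d →
        p ∈ costalkIdeal V F → d ≠ rkF V F →
        p ∈ faceIdeal {S | BCFace V F S} ⊔ linIdeal V F * costalkIdeal V F) ∧
    costalkIdeal V F ≤ faceIdeal {S | BCFace V F S} ⊔ linIdeal V F := by
  have hFne' := nonempty_iff_ne_empty.2 hFne
  refine ⟨fun p d hp hd => ?_, fun p d hp hcost hd => ?_, fun p hcost => ?_⟩
  · exact mem_ideal_of_forall_monomial_mem fun a ha =>
      monomial_mem_faceIdeal_sup_linIdeal hFne' a _ (hp.degree_eq_of_mem_support ha ▸ hd)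
  · refine mem_ideal_of_forall_monomial_mem fun a ha => ?_
    have hB := mem_costalkIdeal_iff.1 hcost a ha
    rcases (hp.degree_eq_of_mem_support ha ▸ hd).lt_or_gt with hlt | hgt
    · exact Ideal.mem_sup_left (monomial_mem_faceIdeal_of_degree_lt hF _ hB hlt)
    · exact monomial_mem_faceIdeal_sup_linIdeal_mul_costalkIdeal a _ hB hgt
  · refine mem_ideal_of_forall_monomial_mem fun a ha => ?_
    rcases lt_or_ge (degree a) (rkF V F) with hlt | hge
    · exact Ideal.mem_sup_left
        (monomial_mem_faceIdeal_of_degree_lt hF _ (mem_costalkIdeal_iff.1 hcost a ha) hlt)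
    · exact monomial_mem_faceIdeal_sup_linIdeal hFne' a _ hge
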